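/- Let n ∈ ℕ, let L ⊆ {0,1}ⁿ be a language all of whose words have length exactly n, and let θ ∈ (0, 2]. Then for all u, v ∈ L and all p, q ∈ ℕ₀: if p ≠ q then lev_θ(u·(01)^{pn}, v·(01)^{qn}) = 2n·|p − q|, and if p = q then lev_θ(u·(01)^{pn}, v·(01)^{qn}) = lev_θ(u, v). -/

import Mathlib

/-!
A common suffix is free: `lev (x ++ [c]) (y ++ [c]) = lev x y` follows by induction on `x` and
`y` from the edit-distance recursion, and the base cases reduce to the fact that for a subword
`y` of `x` deleting the extra letters is optimal, `lev γ θ x y = γ (|x| - |y|)`, because every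
edit changes the length by at most one. For `q < p` the word `v (01)^{qn}` is a subword of
`u (01)^{pn}`, as every binary word of length `n` is a subword of `(01)^n`; hence the distance
is the length difference `2n(p - q)`.
-/

/-- Cost structure for edit distances (formerly `Mathlib.Data.List.EditDistance.Defs`,
removed from Mathlib; reproduced with its old meaning). -/
structure Levenshtein.Cost (α β δ : Type*) where
  /-- Cost to delete an element from a list. -/
  delete : α → δ
  /-- Cost in insert an element into a list. -/
  insert : β → δ
  /-- Cost to substitute one element for another in a list. -/
  substitute : α → β → δ

/-- (Internal implementation detail.) -/
def Levenshtein.impl {α β δ : Type*} [AddZeroClass δ] [Min δ] (C : Levenshtein.Cost α β δ)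
    (xs : List α) (y : β) (d : {r : List δ // 0 < r.length}) : {r : List δ // 0 < r.length} :=
  let ⟨ds, w⟩ := d
  xs.zip (ds.zip ds.tail) |>.foldr
    (init := ⟨[C.insert y + ds.getLast (List.length_pos_iff.mp w)], by simp⟩)
    (fun ⟨x, d₀, d₁⟩ ⟨r, w⟩ =>
      ⟨min (C.delete x + r[0]) (min (C.insert y + d₀) (C.substitute x y + d₁)) :: r, by simp⟩)

/-- `suffixLevenshtein C xs ys` computes the Levenshtein distance
(using the cost functions provided by a `C : Cost α β δ`)
from each suffix of the list `xs` to the list `ys`. -/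
def suffixLevenshtein {α β δ : Type*} [AddZeroClass δ] [Min δ] (C : Levenshtein.Cost α β δ)
    (xs : List α) (ys : List β) : {r : List δ // 0 < r.length} :=
  ys.foldr
    (Levenshtein.impl C xs)
    (xs.foldr (init := ⟨[0], by simp⟩) (fun a ⟨r, w⟩ => ⟨(C.delete a + r[0]) :: r, by simp⟩))

/-- `levenshtein C xs ys` computes the Levenshtein distance
(using the cost functions provided by a `C : Cost α β δ`)
from the list `xs` to the list `ys`. -/
def levenshtein {α β δ : Type*} [AddZeroClass δ] [Min δ] (C : Levenshtein.Cost α β δ)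
    (xs : List α) (ys : List β) : δ :=
  let ⟨r, w⟩ := suffixLevenshtein C xs ys
  r[0]

/-- Cost structure for the generalized Levenshtein distance:
insertions and deletions cost `γ`, substitutions cost `θ`. -/
def levCost (A : Type*) [DecidableEq A] (γ θ : ℝ) : Levenshtein.Cost A A ℝ where
  delete _ := γ
  insert _ := γ
  substitute a b := if a = b then 0 else θ

/-- The generalized Levenshtein distance `lev_{γ,θ}` between two words over `A`:
the minimal total cost of transforming one word into the other by insertions and
deletions (of cost `γ`) and substitutions (of cost `θ`). -/
def lev {A : Type*} [DecidableEq A] (γ θ : ℝ) (u v : List A) : ℝ :=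
  levenshtein (levCost A γ θ) u v

/-- The isometry group of a language `L ⊆ A*` with respect to a distance `d` on `A*`:
the group (under composition) of bijections of `L` preserving `d`. -/
def IsomGroup {A : Type*} (d : List A → List A → ℝ) (L : Set (List A)) :
    Subgroup (Equiv.Perm L) where
  carrier := {φ : Equiv.Perm L | ∀ u v : L, d (φ u) (φ v) = d u v}
  one_mem' := by intro u v; rfl
  mul_mem' := by intro φ ψ hφ hψ u v; simp only [Equiv.Perm.mul_apply]; rw [hφ, hψ]
  inv_mem' := by
    intro φ hφ u v
    have h := hφ (φ⁻¹ u) (φ⁻¹ v)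
    simpa using h.symm

/-- The word `(01)ᵏ` over `{0,1}` (with `0 = false`, `1 = true`). -/
def pat (k : ℕ) : List Bool := (List.replicate k [false, true]).flatten

open List

namespace Levenshtein

variable {α β δ : Type*} [AddZeroClass δ] [Min δ] (C : Cost α β δ)

theorem impl_length (xs : List α) (y : β) (d : {r : List δ // 0 < r.length})
    (hd : d.1.length = xs.length + 1) : (impl C xs y d).1.length = xs.length + 1 := by
  induction xs generalizing d with
  | nil => rfl
  | cons x xs ih =>
    match d, hd with
    | ⟨d₀ :: d₁ :: ds, _⟩, hd =>
      simpa [impl] using ih ⟨d₁ :: ds, by simp⟩ (by simpa using hd)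

theorem impl_cons (x : α) (xs : List α) (y : β) (d : δ) (ds : List δ)
    (w : 0 < (d :: ds).length) (w' : 0 < ds.length) :
    impl C (x :: xs) y ⟨d :: ds, w⟩ =
      let r := impl C xs y ⟨ds, w'⟩
      ⟨min (C.delete x + r.1[0]'r.2) (min (C.insert y + d) (C.substitute x y + ds[0])) :: r.1,
        by simp⟩ :=
  match ds, w' with | _ :: _, _ => rfl

theorem suffixLevenshtein_length (xs : List α) (ys : List β) :
    (suffixLevenshtein C xs ys).1.length = xs.length + 1 := by
  induction ys with
  | nil => induction xs <;> simp_all [suffixLevenshtein]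
  | cons y ys ih => exact impl_length C xs y _ ih

theorem suffixLevenshtein_cons_left (x : α) (xs : List α) (ys : List β) :
    suffixLevenshtein C (x :: xs) ys =
      ⟨levenshtein C (x :: xs) ys :: (suffixLevenshtein C xs ys).1, by simp⟩ := by
  induction ys with
  | nil => rfl
  | cons y ys ih =>
    have htail : (suffixLevenshtein C (x :: xs) (y :: ys)).1.tail =
        (suffixLevenshtein C xs (y :: ys)).1 := by
      change (impl C (x :: xs) y (suffixLevenshtein C (x :: xs) ys)).1.tail = _
      rw [ih, impl_cons C x xs y _ _ _ (by simp [suffixLevenshtein_length])]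
      rfl
    apply Subtype.ext
    show _ = (suffixLevenshtein C (x :: xs) (y :: ys)).1[0]'(suffixLevenshtein C _ _).2 ::
      (suffixLevenshtein C xs (y :: ys)).1
    rw [← htail]
    generalize suffixLevenshtein C (x :: xs) (y :: ys) = s
    match s with
    | ⟨_ :: _, _⟩ => rfl

theorem levenshtein_nil_cons (y : β) (ys : List β) :
    levenshtein C [] (y :: ys) = C.insert y + levenshtein C [] ys := by
  have hl : (suffixLevenshtein C [] ys).1.length = 1 := suffixLevenshtein_length C [] ys
  change (impl C [] y (suffixLevenshtein C [] ys)).1[0]'(impl C [] y _).2 = _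
  unfold levenshtein
  generalize suffixLevenshtein C [] ys = d at hl ⊢
  match d, hl with
  | ⟨[_], _⟩, _ => rfl

theorem levenshtein_cons_nil (x : α) (xs : List α) :
    levenshtein C (x :: xs) ([] : List β) = C.delete x + levenshtein C xs [] :=
  rfl

theorem levenshtein_cons_cons (x : α) (xs : List α) (y : β) (ys : List β) :
    levenshtein C (x :: xs) (y :: ys) =
      min (C.delete x + levenshtein C xs (y :: ys))
        (min (C.insert y + levenshtein C (x :: xs) ys)
          (C.substitute x y + levenshtein C xs ys)) := by
  have h : (suffixLevenshtein C (x :: xs) (y :: ys)).1 =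
      min (C.delete x + levenshtein C xs (y :: ys))
        (min (C.insert y + levenshtein C (x :: xs) ys)
          (C.substitute x y + levenshtein C xs ys)) :: (suffixLevenshtein C xs (y :: ys)).1 := by
    change (impl C (x :: xs) y (suffixLevenshtein C (x :: xs) ys)).1 = _
    rw [suffixLevenshtein_cons_left, impl_cons C x xs y _ _ _ (by simp [suffixLevenshtein_length])]
    rfl
  unfold levenshtein
  simp only [h]
  rfl

end Levenshtein

section lev

open Levenshtein

variable {A : Type*} [DecidableEq A] {γ θ : ℝ}

@[simp]
theorem lev_nil_left (y : List A) : lev γ θ [] y = γ * y.length := by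
  induction y with
  | nil => simp [lev, levenshtein, suffixLevenshtein]
  | cons b y ih =>
    simp only [lev, levenshtein_nil_cons] at ih ⊢
    rw [ih, length_cons, Nat.cast_succ]
    simp only [levCost]
    ring

@[simp]
theorem lev_nil_right (x : List A) : lev γ θ x [] = γ * x.length := by
  induction x with
  | nil => simp
  | cons a x ih =>
    simp only [lev, levenshtein_cons_nil] at ih ⊢
    rw [ih, length_cons, Nat.cast_succ]
    simp only [levCost]
    ring

theorem lev_cons_cons (a b : A) (x y : List A) :
    lev γ θ (a :: x) (b :: y) =
      min (γ + lev γ θ x (b :: y))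
        (min (γ + lev γ θ (a :: x) y) ((if a = b then 0 else θ) + lev γ θ x y)) :=
  levenshtein_cons_cons ..

theorem lev_comm : ∀ x y : List A, lev γ θ x y = lev γ θ y x
  | [], y => by simp
  | x, [] => by simp
  | a :: x, b :: y => by
    rw [lev_cons_cons, lev_cons_cons, lev_comm x (b :: y), lev_comm (a :: x) y, lev_comm x y,
      min_left_comm]
    simp only [eq_comm (a := a)]

theorem lev_cons_left_le (a : A) (x y : List A) : lev γ θ (a :: x) y ≤ γ + lev γ θ x y := by
  cases y with
  | nil => simp only [lev_nil_right, length_cons, Nat.cast_succ]; linarith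
  | cons b y => exact (lev_cons_cons a b x y).trans_le (min_le_left _ _)

theorem lev_cons_cons_self_le (a : A) (x y : List A) :
    lev γ θ (a :: x) (a :: y) ≤ lev γ θ x y := by
  rw [lev_cons_cons, if_pos rfl, zero_add]
  exact (min_le_right _ _).trans (min_le_right _ _)

theorem lev_le_of_sublist {x y : List A} (h : y <+ x) :
    lev γ θ x y ≤ γ * (x.length - y.length) := by
  induction h with
  | slnil => simp
  | cons a _ ih =>
    refine (lev_cons_left_le a _ _).trans ?_
    simp only [length_cons, Nat.cast_succ]
    linarith
  | cons_cons a _ ih =>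
    refine (lev_cons_cons_self_le a _ _).trans ?_
    simpa using ih

theorem mul_length_sub_le_lev (hγ : 0 ≤ γ) (hθ : 0 ≤ θ) :
    ∀ x y : List A, γ * (x.length - y.length) ≤ lev γ θ x y
  | [], y => by
    simp only [lev_nil_left, length_nil, Nat.cast_zero, zero_sub, mul_neg, neg_le_self_iff]
    positivity
  | x, [] => by simp
  | a :: x, b :: y => by
    have h₁ := mul_length_sub_le_lev hγ hθ x (b :: y)
    have h₂ := mul_length_sub_le_lev hγ hθ (a :: x) y
    have h₃ := mul_length_sub_le_lev hγ hθ x y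
    have hab : (0 : ℝ) ≤ if a = b then 0 else θ := by split_ifs <;> simp [hθ]
    simp only [length_cons, Nat.cast_succ] at h₁ h₂ ⊢
    rw [lev_cons_cons]
    refine le_min ?_ (le_min ?_ ?_) <;> nlinarith

theorem lev_eq_of_sublist (hγ : 0 ≤ γ) (hθ : 0 ≤ θ) {x y : List A} (h : y <+ x) :
    lev γ θ x y = γ * (x.length - y.length) :=
  (lev_le_of_sublist h).antisymm (mul_length_sub_le_lev hγ hθ x y)

theorem lev_append_singleton (hγ : 0 ≤ γ) (hθ : 0 ≤ θ) (c : A) :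
    ∀ x y : List A, lev γ θ (x ++ [c]) (y ++ [c]) = lev γ θ x y
  | [], y => by
    rw [nil_append, lev_comm, lev_eq_of_sublist hγ hθ (singleton_sublist.2 (by simp)),
      lev_nil_left]
    simp
  | x, [] => by
    rw [nil_append, lev_eq_of_sublist hγ hθ (singleton_sublist.2 (by simp)), lev_nil_right]
    simp
  | a :: x, b :: y => by
    simp only [cons_append]
    rw [lev_cons_cons, lev_cons_cons, ← cons_append, ← cons_append,
      lev_append_singleton hγ hθ c x (b :: y), lev_append_singleton hγ hθ c (a :: x) y,
      lev_append_singleton hγ hθ c x y]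

theorem lev_append_right (hγ : 0 ≤ γ) (hθ : 0 ≤ θ) (w : List A) :
    ∀ x y : List A, lev γ θ (x ++ w) (y ++ w) = lev γ θ x y := by
  induction w with
  | nil => simp
  | cons c w ih =>
    intro x y
    rw [← singleton_append, ← append_assoc, ← append_assoc, ih,
      lev_append_singleton hγ hθ]

end lev

theorem pat_succ (k : ℕ) : pat (k + 1) = [false, true] ++ pat k := by
  simp [pat, replicate_succ]

theorem pat_add (a b : ℕ) : pat (a + b) = pat a ++ pat b := by
  simp only [pat, replicate_add, flatten_append]

@[simp]
theorem length_pat (k : ℕ) : (pat k).length = 2 * k := by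
  simp [pat, mul_comm]

theorem sublist_pat_length : ∀ w : List Bool, w <+ pat w.length
  | [] => by simp [pat]
  | c :: w => by
    rw [length_cons, pat_succ]
    cases c with
    | false => exact ((sublist_pat_length w).cons true).cons_cons false
    | true => exact ((sublist_pat_length w).cons_cons true).cons false

theorem append_pat_sublist_append_pat {y : List Bool} {k m : ℕ} (h : y.length + k ≤ m)
    (x : List Bool) : y ++ pat k <+ x ++ pat m := by
  obtain ⟨j, rfl⟩ := Nat.exists_eq_add_of_le h
  calc y ++ pat k <+ pat y.length ++ pat k := (sublist_pat_length y).append_right _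
    _ <+ pat (y.length + k) ++ pat j := by rw [pat_add]; exact sublist_append_left _ _
    _ <+ x ++ pat (y.length + k + j) := by
      rw [← pat_add]
      exact sublist_append_right _ _

theorem lev_append_pat_of_lt {γ θ : ℝ} (hγ : 0 ≤ γ) (hθ : 0 ≤ θ) {n : ℕ} {u v : List Bool}
    (hu : u.length = n) (hv : v.length = n) {p q : ℕ} (hqp : q < p) :
    lev γ θ (u ++ pat (p * n)) (v ++ pat (q * n)) = 2 * γ * n * (p - q) := by
  have hsub : v ++ pat (q * n) <+ u ++ pat (p * n) :=
    append_pat_sublist_append_pat (by rw [hv]; nlinarith) u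
  rw [lev_eq_of_sublist hγ hθ hsub]
  simp only [length_append, length_pat, hu, hv]
  push_cast
  ring

/-- For `L ⊆ {0,1}ⁿ`, `θ ∈ (0, 2]`, `u, v ∈ L`, and `p, q ∈ ℕ₀`:
if `p ≠ q` then `lev_θ(u·(01)^{pn}, v·(01)^{qn}) = 2n|p - q|`, and if `p = q` then
`lev_θ(u·(01)^{pn}, v·(01)^{qn}) = lev_θ(u, v)`. -/
theorem stmt_16 (n : ℕ) (L : Set (List Bool)) (hL : ∀ w ∈ L, w.length = n)
    (θ : ℝ) (hθ : θ ∈ Set.Ioc (0 : ℝ) 2)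
    (u v : List Bool) (hu : u ∈ L) (hv : v ∈ L) (p q : ℕ) :
    (p ≠ q →
      lev 1 θ (u ++ pat (p * n)) (v ++ pat (q * n)) = 2 * n * |(p : ℝ) - (q : ℝ)|) ∧
    (p = q →
      lev 1 θ (u ++ pat (p * n)) (v ++ pat (q * n)) = lev 1 θ u v) := by
  have hθ₀ : 0 ≤ θ := hθ.1.le
  refine ⟨fun hpq => ?_, fun hpq => hpq ▸ lev_append_right zero_le_one hθ₀ _ u v⟩
  rcases hpq.lt_or_gt with hlt | hgt
  · have hlt' : (p : ℝ) < q := by exact_mod_cast hlt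
    rw [lev_comm, lev_append_pat_of_lt zero_le_one hθ₀ (hL v hv) (hL u hu) hlt,
      abs_of_neg (by linarith)]
    ring
  · have hgt' : (q : ℝ) < p := by exact_mod_cast hgt
    rw [lev_append_pat_of_lt zero_le_one hθ₀ (hL u hu) (hL v hv) hgt, abs_of_pos (by linarith)]
    ring
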